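/- Let p be an odd prime, n ≥ 1, and let f : U_n → ℂ and h : p^n ℤ_p → ℂ be integrable (with respect to Haar measure on ℚ_p restricted to these sets). Then ∫_{U_n} f(u²) du = ∫_{U_n} f(u) du and ∫_{U_n} h(u - u⁻¹) du = ∫_{p^n ℤ_p} h(x) dx. -/

import Mathlib

/-!
For odd `p` both `u ↦ u ^ 2` and `u ↦ u - u⁻¹` are isometries of the disc `‖u - 1‖ < 1`: the
differences factor as `(u - v) (u + v)` and `(u - v) (u v + 1) / (u v)`, and `u + v`, `u v + 1`
lie within distance `< 1` of `2`, which is a unit. They are onto the appropriate discs: square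
roots come from Hensel's lemma, and `u - u⁻¹ = x` is solved by `u = x / 2 + √(1 + x² / 4)`,
since then `u (u - x) = 1`.

In an ultrametric group an isometry of a closed ball onto a closed ball pulls every closed ball
back to a closed ball of the same radius, so by translation invariance it preserves the Haar
measure of all closed balls. These form a π-system generating the Borel σ-algebra, so the
isometry carries the restricted Haar measure to the restricted Haar measure.
-/

open MeasureTheory Metric Set TopologicalSpace Polynomial

lemma mapsTo_closedBall_of_isometryOn {X Y : Type*} [PseudoMetricSpace X] [PseudoMetricSpace Y]
    {ψ : X → Y} {a : X} {r : ℝ}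
    (hψ : ∀ u ∈ closedBall a r, ∀ v ∈ closedBall a r, dist (ψ u) (ψ v) = dist u v) :
    MapsTo ψ (closedBall a r) (closedBall (ψ a) r) := fun u hu => by
  rw [mem_closedBall, hψ u hu a (mem_closedBall_self (dist_nonneg.trans hu))]
  exact hu

lemma preimage_closedBall_inter_of_isometryOn {X Y : Type*} [PseudoMetricSpace X]
    [PseudoMetricSpace Y] {ψ : X → Y} {S : Set X}
    (hψ : ∀ u ∈ S, ∀ v ∈ S, dist (ψ u) (ψ v) = dist u v) {c : X} (hc : c ∈ S) (ρ : ℝ) :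
    ψ ⁻¹' closedBall (ψ c) ρ ∩ S = closedBall c ρ ∩ S := by
  ext u
  simp only [mem_inter_iff, mem_preimage, mem_closedBall]
  exact and_congr_left fun hu => by rw [hψ u hu c hc]

namespace IsUltrametricDist

section Metric

variable {X : Type*} [PseudoMetricSpace X] [IsUltrametricDist X]

lemma isTopologicalBasis_closedBall :
    IsTopologicalBasis {s : Set X | ∃ c, ∃ ρ > 0, s = closedBall c ρ} := by
  refine isTopologicalBasis_of_isOpen_of_nhds ?_ fun x U hxU hU => ?_
  · rintro _ ⟨c, ρ, hρ, rfl⟩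
    exact isOpen_closedBall c hρ.ne'
  · obtain ⟨ε, hε, hball⟩ := Metric.isOpen_iff.mp hU x hxU
    exact ⟨closedBall x (ε / 2), ⟨x, ε / 2, half_pos hε, rfl⟩,
      mem_closedBall_self (half_pos hε).le, (closedBall_subset_ball (half_lt_self hε)).trans hball⟩

lemma isPiSystem_closedBall :
    IsPiSystem {s : Set X | ∃ c, ∃ ρ > 0, s = closedBall c ρ} := by
  rintro _ ⟨c, ρ, hρ, rfl⟩ _ ⟨c', ρ', hρ', rfl⟩ hne
  rcases closedBall_subset_trichotomy (x := c) (y := c') (r := ρ) (s := ρ') with h | h | h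
  · exact ⟨c, ρ, hρ, inter_eq_left.mpr h⟩
  · exact ⟨c', ρ', hρ', inter_eq_right.mpr h⟩
  · exact absurd h (not_disjoint_iff_nonempty_inter.mpr hne)

lemma closedBall_inter_closedBall_of_mem {a c : X} {r : ℝ} (hc : c ∈ closedBall a r) (ρ : ℝ) :
    closedBall c ρ ∩ closedBall a r = closedBall c (min ρ r) := by
  ext u
  simp [closedBall_eq_of_mem hc]

end Metric

lemma norm_eq_of_norm_sub_lt {E : Type*} [SeminormedAddCommGroup E] [IsUltrametricDist E]
    {x y : E} (h : ‖x - y‖ < ‖y‖) : ‖x‖ = ‖y‖ := by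
  rw [← sub_add_cancel x y, norm_add_eq_max_of_norm_ne_norm h.ne, max_eq_right h.le]

section Measure

variable {E : Type*} [NormedAddCommGroup E] [IsUltrametricDist E] [MeasurableSpace E]
  [BorelSpace E] (μ : Measure E) [μ.IsAddHaarMeasure]

lemma measure_closedBall_inter_closedBall_of_mem {a c : E} {r : ℝ} (hc : c ∈ closedBall a r)
    (ρ : ℝ) : μ (closedBall c ρ ∩ closedBall a r) = μ (closedBall 0 (min ρ r)) := by
  rw [closedBall_inter_closedBall_of_mem hc, Measure.addHaar_closedBall_center]

variable {ψ : E → E} {a : E} {r : ℝ}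

lemma measure_preimage_closedBall_inter_of_isometryOn
    (hψ : ∀ u ∈ closedBall a r, ∀ v ∈ closedBall a r, dist (ψ u) (ψ v) = dist u v)
    (hsurj : SurjOn ψ (closedBall a r) (closedBall (ψ a) r)) (y : E) (ρ : ℝ) :
    μ (ψ ⁻¹' closedBall y ρ ∩ closedBall a r) = μ (closedBall y ρ ∩ closedBall (ψ a) r) := by
  rcases (closedBall y ρ ∩ closedBall (ψ a) r).eq_empty_or_nonempty with hempty | ⟨x, hxy, hxa⟩
  · have : ψ ⁻¹' closedBall y ρ ∩ closedBall a r = ∅ :=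
      eq_empty_of_forall_notMem fun u ⟨hu, hua⟩ =>
        hempty.subset ⟨hu, mapsTo_closedBall_of_isometryOn hψ hua⟩
    rw [this, hempty]
  obtain ⟨c, hc, rfl⟩ := hsurj hxa
  rw [closedBall_eq_of_mem hxy, preimage_closedBall_inter_of_isometryOn hψ hc,
    measure_closedBall_inter_closedBall_of_mem μ hc,
    measure_closedBall_inter_closedBall_of_mem μ hxa]

theorem map_restrict_closedBall_of_isometryOn [ProperSpace E] (hψm : Measurable ψ)
    (hψ : ∀ u ∈ closedBall a r, ∀ v ∈ closedBall a r, dist (ψ u) (ψ v) = dist u v)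
    (hsurj : SurjOn ψ (closedBall a r) (closedBall (ψ a) r)) :
    (μ.restrict (closedBall a r)).map ψ = μ.restrict (closedBall (ψ a) r) := by
  have : IsFiniteMeasure (μ.restrict (closedBall a r)) :=
    isFiniteMeasure_restrict.mpr (isCompact_closedBall a r).measure_lt_top.ne
  refine ext_of_generate_finite _
    (BorelSpace.measurable_eq.trans isTopologicalBasis_closedBall.borel_eq_generateFrom)
    isPiSystem_closedBall ?_ ?_
  · rintro _ ⟨y, ρ, -, rfl⟩
    rw [Measure.map_apply hψm measurableSet_closedBall,
      Measure.restrict_apply (hψm measurableSet_closedBall),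
      Measure.restrict_apply measurableSet_closedBall,
      measure_preimage_closedBall_inter_of_isometryOn μ hψ hsurj]
  · rw [Measure.map_apply hψm MeasurableSet.univ, preimage_univ, Measure.restrict_apply_univ,
      Measure.restrict_apply_univ, Measure.addHaar_closedBall_center,
      Measure.addHaar_closedBall_center μ (ψ a)]

theorem setIntegral_closedBall_comp_of_isometryOn [ProperSpace E] {F : Type*}
    [NormedAddCommGroup F] [NormedSpace ℝ F] {S : Set E} (hψm : Measurable ψ)
    (hψ : ∀ u ∈ S, ∀ v ∈ S, dist (ψ u) (ψ v) = dist u v) (ha : a ∈ S)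
    (hS : closedBall a r ⊆ S) (himage : closedBall (ψ a) r ⊆ ψ '' S) {g : E → F}
    (hg : AEStronglyMeasurable g (μ.restrict (closedBall (ψ a) r))) :
    ∫ u in closedBall a r, g (ψ u) ∂μ = ∫ y in closedBall (ψ a) r, g y ∂μ := by
  have hsurj : SurjOn ψ (closedBall a r) (closedBall (ψ a) r) := fun y hy => by
    obtain ⟨x, hx, rfl⟩ := himage hy
    exact ⟨x, by rwa [mem_closedBall, ← hψ x hx a ha], rfl⟩
  have hmap := map_restrict_closedBall_of_isometryOn μ hψm
    (fun u hu v hv => hψ u (hS hu) v (hS hv)) hsurj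
  rw [← hmap, integral_map hψm.aemeasurable (hmap ▸ hg)]

end Measure

section UnitBall

variable {K : Type*} [NormedField K] [IsUltrametricDist K]

lemma norm_eq_one_of_mem_ball_one {u : K} (hu : u ∈ ball (1 : K) 1) : ‖u‖ = 1 := by
  rw [mem_ball, dist_eq_norm] at hu
  rw [norm_eq_of_norm_sub_lt (by rwa [norm_one]), norm_one]

lemma mul_mem_ball_one {u v : K} (hu : u ∈ ball (1 : K) 1) (hv : v ∈ ball (1 : K) 1) :
    u * v ∈ ball (1 : K) 1 := by
  have hu1 := norm_eq_one_of_mem_ball_one hu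
  rw [mem_ball, dist_eq_norm] at hu hv ⊢
  calc ‖u * v - 1‖ = ‖u * (v - 1) + (u - 1)‖ := by ring_nf
    _ ≤ max ‖u * (v - 1)‖ ‖u - 1‖ := norm_add_le_max _ _
    _ < 1 := max_lt (by rwa [norm_mul, hu1, one_mul]) hu

variable (h2 : ‖(2 : K)‖ = 1)
include h2

lemma norm_eq_one_of_norm_sub_two_lt_one {x : K} (hx : ‖x - 2‖ < 1) : ‖x‖ = 1 :=
  h2 ▸ norm_eq_of_norm_sub_lt (h2 ▸ hx)

lemma dist_sq_sq_of_mem_ball_one {u v : K} (hu : u ∈ ball (1 : K) 1)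
    (hv : v ∈ ball (1 : K) 1) : dist (u ^ 2) (v ^ 2) = dist u v := by
  rw [mem_ball, dist_eq_norm] at hu hv
  have hsum : ‖u + v‖ = 1 := norm_eq_one_of_norm_sub_two_lt_one h2 <|
    calc ‖u + v - 2‖ = ‖(u - 1) + (v - 1)‖ := by ring_nf
      _ ≤ max ‖u - 1‖ ‖v - 1‖ := norm_add_le_max _ _
      _ < 1 := max_lt hu hv
  rw [dist_eq_norm, dist_eq_norm, sq_sub_sq, norm_mul, hsum, one_mul]

lemma dist_sub_inv_sub_inv_of_mem_ball_one {u v : K} (hu : u ∈ ball (1 : K) 1)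
    (hv : v ∈ ball (1 : K) 1) : dist (u - u⁻¹) (v - v⁻¹) = dist u v := by
  have huv := mul_mem_ball_one hu hv
  have hu0 : u ≠ 0 := norm_ne_zero_iff.mp (by simp [norm_eq_one_of_mem_ball_one hu])
  have hv0 : v ≠ 0 := norm_ne_zero_iff.mp (by simp [norm_eq_one_of_mem_ball_one hv])
  have hsum : ‖u * v + 1‖ = 1 := norm_eq_one_of_norm_sub_two_lt_one h2 <| by
    rw [mem_ball, dist_eq_norm] at huv
    rwa [show u * v + 1 - 2 = u * v - 1 by ring]
  have hfactor : u - u⁻¹ - (v - v⁻¹) = (u - v) * (u * v + 1) / (u * v) := by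
    field_simp
    ring
  rw [dist_eq_norm, dist_eq_norm, hfactor, norm_div, norm_mul, hsum,
    norm_eq_one_of_mem_ball_one huv, mul_one, div_one]

lemma ball_zero_subset_image_sub_inv (hsq : ball (1 : K) 1 ⊆ (· ^ 2) '' ball (1 : K) 1) :
    ball (0 : K) 1 ⊆ (fun u => u - u⁻¹) '' ball (1 : K) 1 := by
  have : NeZero (2 : K) := ⟨norm_ne_zero_iff.mp (by simp [h2])⟩
  intro x hx
  rw [mem_ball_zero_iff] at hx
  have hx2 : ‖x / 2‖ < 1 := by rwa [norm_div, h2, div_one]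
  obtain ⟨t, ht, hts⟩ : 1 + (x / 2) ^ 2 ∈ (· ^ 2) '' ball (1 : K) 1 := hsq <| by
    rw [mem_ball, dist_eq_norm, add_sub_cancel_left, norm_pow]
    exact pow_lt_one₀ (norm_nonneg _) hx2 two_ne_zero
  rw [mem_ball, dist_eq_norm] at ht
  refine ⟨x / 2 + t, ?_, ?_⟩
  · rw [mem_ball, dist_eq_norm, add_sub_assoc]
    exact (norm_add_le_max _ _).trans_lt (max_lt hx2 ht)
  · have hinv : (x / 2 + t)⁻¹ = x / 2 + t - x := by
      refine inv_eq_of_mul_eq_one_right ?_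
      linear_combination hts + (x / 2 + t) * add_halves x
    simp only [hinv]
    ring

end UnitBall

end IsUltrametricDist

namespace Padic

variable {p : ℕ} [Fact p.Prime]

lemma norm_two_eq_one (hp : p ≠ 2) : ‖(2 : ℚ_[p])‖ = 1 := by
  exact_mod_cast norm_natCast_eq_one_iff.mpr
    ((Nat.coprime_primes Fact.out Nat.prime_two).mpr hp)

lemma _root_.PadicInt.norm_two_eq_one (hp : p ≠ 2) : ‖(2 : ℤ_[p])‖ = 1 := by
  exact_mod_cast Padic.norm_two_eq_one hp

lemma ball_one_subset_image_sq (hp : p ≠ 2) :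
    ball (1 : ℚ_[p]) 1 ⊆ (· ^ 2) '' ball (1 : ℚ_[p]) 1 := by
  intro v hv
  let w : ℤ_[p] := ⟨v, (IsUltrametricDist.norm_eq_one_of_mem_ball_one hv).le⟩
  rw [mem_ball, dist_eq_norm] at hv
  have h2 := PadicInt.norm_two_eq_one hp
  have hF : ∀ z : ℤ_[p], (X ^ 2 - C w).aeval z = z ^ 2 - w := fun z => by simp
  have hF' : ∀ z : ℤ_[p], (derivative (X ^ 2 - C w)).aeval z = 2 * z := fun z => by
    simp [one_add_one_eq_two]
  obtain ⟨z, hz, hz1, -⟩ := hensels_lemma (F := X ^ 2 - C w) (a := 1) (by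
    rw [hF, hF', mul_one, h2, one_pow, one_pow, norm_sub_rev]
    exact hv)
  rw [hF, sub_eq_zero] at hz
  rw [hF', mul_one, h2] at hz1
  refine ⟨z, ?_, ?_⟩
  · rwa [mem_ball, dist_eq_norm]
  · exact congrArg ((↑) : ℤ_[p] → ℚ_[p]) hz

end Padic

open IsUltrametricDist

theorem padic_substitution_formulas (p : ℕ) [Fact p.Prime] (hp : p ≠ 2)
    (n : ℕ) (hn : 1 ≤ n)
    [MeasurableSpace ℚ_[p]] [BorelSpace ℚ_[p]]
    (μ : Measure ℚ_[p]) [μ.IsAddHaarMeasure]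
    (f h : ℚ_[p] → ℂ)
    (hf : IntegrableOn f {u : ℚ_[p] | ‖u - 1‖ ≤ (p : ℝ) ^ (-(n : ℤ))} μ)
    (hh : IntegrableOn h {x : ℚ_[p] | ‖x‖ ≤ (p : ℝ) ^ (-(n : ℤ))} μ) :
    (∫ u in {u : ℚ_[p] | ‖u - 1‖ ≤ (p : ℝ) ^ (-(n : ℤ))}, f (u ^ 2) ∂μ) =
      (∫ u in {u : ℚ_[p] | ‖u - 1‖ ≤ (p : ℝ) ^ (-(n : ℤ))}, f u ∂μ) ∧
    (∫ u in {u : ℚ_[p] | ‖u - 1‖ ≤ (p : ℝ) ^ (-(n : ℤ))}, h (u - u⁻¹) ∂μ) =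
      (∫ x in {x : ℚ_[p] | ‖x‖ ≤ (p : ℝ) ^ (-(n : ℤ))}, h x ∂μ) := by
  set r : ℝ := (p : ℝ) ^ (-(n : ℤ))
  have hr : r < 1 :=
    zpow_lt_one_of_neg₀ (by exact_mod_cast (Fact.out : p.Prime).one_lt) (by omega)
  have hU : {u : ℚ_[p] | ‖u - 1‖ ≤ r} = closedBall 1 r := by ext; simp [dist_eq_norm]
  have hV : {x : ℚ_[p] | ‖x‖ ≤ r} = closedBall 0 r := by ext; simp
  simp only [hU, hV] at hf hh ⊢
  have h2 := Padic.norm_two_eq_one hp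
  have hball : closedBall (1 : ℚ_[p]) r ⊆ ball 1 1 := closedBall_subset_ball hr
  have hsq := Padic.ball_one_subset_image_sq hp
  constructor
  · simpa using setIntegral_closedBall_comp_of_isometryOn μ (ψ := (· ^ 2))
      (continuous_pow 2).measurable (fun u hu v hv => dist_sq_sq_of_mem_ball_one h2 hu hv)
      (mem_ball_self one_pos) hball (by rw [one_pow]; exact hball.trans hsq)
      hf.aestronglyMeasurable
  · simpa using setIntegral_closedBall_comp_of_isometryOn μ (ψ := fun u => u - u⁻¹)
      (measurable_id.sub measurable_inv)
      (fun u hu v hv => dist_sub_inv_sub_inv_of_mem_ball_one h2 hu hv) (mem_ball_self one_pos)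
      hball
      (by simpa using (closedBall_subset_ball hr).trans (ball_zero_subset_image_sub_inv h2 hsq))
      (by simpa using hh.aestronglyMeasurable)
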